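/- arXiv:2507.14297 — 4 statements merged into one kernel-verified Lean document; each statement's English description precedes it below -/
import Mathlib

section
/- Let σ : ℕ → ℕ be injective. Then there exists a set B ⊆ ℕ with B nonempty and B ≠ ℕ such that for every n ∈ ℕ: n ∈ B if and only if σ(σ(n)) ∈ B. -/
/-- For every injective `σ : ℕ → ℕ` there is a nonempty proper subset `B ⊆ ℕ` such that
`n ∈ B ↔ σ(σ(n)) ∈ B` for all `n`. -/
theorem stmt5 (σ : ℕ → ℕ) (hσ : Function.Injective σ) :
    ∃ B : Set ℕ, B.Nonempty ∧ B ≠ Set.univ ∧ ∀ n : ℕ, n ∈ B ↔ σ (σ n) ∈ B := by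
  by_cases hper : ∃ n k, 0 < k ∧ σ^[k] n = n
  · -- periodic point: take the finite σ² cycle through n₀
    obtain ⟨n₀, k, hk, hfix⟩ := hper
    set g : ℕ → ℕ := fun x => σ (σ x) with hg
    have hg2 : g = σ^[2] := by
      funext x; simp [hg, Function.iterate_succ_apply]
    have hgfix : g^[k] n₀ = n₀ := by
      rw [hg2, ← Function.iterate_mul]
      have : 2 * k = k + k := by ring
      rw [this, Function.iterate_add_apply, hfix, hfix]
    have hginj : Function.Injective g := by
      intro a b h; exact hσ (hσ h)
    refine ⟨{m | ∃ i, g^[i] n₀ = m}, ⟨n₀, 0, rfl⟩, ?_, ?_⟩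
    · -- proper: the set is finite
      have hmod : ∀ i, g^[i] n₀ = g^[i % k] n₀ := by
        intro i
        conv_lhs => rw [← Nat.mod_add_div i k]
        rw [Function.iterate_add_apply, Function.iterate_mul,
          Function.iterate_fixed hgfix]
      have hfin : Set.Finite {m | ∃ i, g^[i] n₀ = m} := by
        apply Set.Finite.subset ((Finset.range k).image (fun i => g^[i] n₀)).finite_toSet
        rintro m ⟨i, rfl⟩
        simp only [Finset.coe_image, Set.mem_image, Finset.mem_coe, Finset.mem_range]
        exact ⟨i % k, Nat.mod_lt i hk, (hmod i).symm⟩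
      intro h
      exact Set.infinite_univ (h ▸ hfin)
    · intro n
      constructor
      · rintro ⟨i, rfl⟩
        exact ⟨i + 1, by rw [Function.iterate_succ_apply', hg]⟩
      · rintro ⟨i, hi⟩
        have : g^[i + k] n₀ = g n := by
          rw [Function.iterate_add_apply, hgfix, hi]
        have h2 : g (g^[i + k - 1] n₀) = g n := by
          have he : g^[i + k] n₀ = g (g^[i + k - 1] n₀) := by
            conv_lhs => rw [show i + k = (i + k - 1) + 1 by omega,
              Function.iterate_succ_apply']
          rw [← he]; exact this
        exact ⟨i + k - 1, hginj h2⟩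
  · -- no periodic points: parity of distance to 0 along σ-orbits
    push_neg at hper
    refine ⟨{n | ∃ a b, a % 2 = b % 2 ∧ σ^[a] n = σ^[b] 0}, ⟨0, 0, 0, rfl, rfl⟩, ?_, ?_⟩
    · -- σ 0 is not in the set
      intro h
      have hmem : σ 0 ∈ {n | ∃ a b, a % 2 = b % 2 ∧ σ^[a] n = σ^[b] 0} := by
        rw [h]; trivial
      obtain ⟨a, b, hab, hE⟩ := hmem
      have hE' : σ^[a + 1] 0 = σ^[b] 0 := by
        rw [Function.iterate_succ_apply]; exact hE
      have hne : a + 1 ≠ b := by omega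
      rcases lt_or_gt_of_ne hne with hlt | hgt
      · obtain ⟨c, hc⟩ : ∃ c, b = (a + 1) + c := ⟨b - (a + 1), by omega⟩
        have h2 : σ^[a + 1] (σ^[c] 0) = σ^[a + 1] 0 := by
          rw [← Function.iterate_add_apply, ← hc]; exact hE'.symm
        exact hper 0 c (by omega) ((hσ.iterate (a + 1)) h2)
      · obtain ⟨c, hc⟩ : ∃ c, a + 1 = b + c := ⟨a + 1 - b, by omega⟩
        have h2 : σ^[b] (σ^[c] 0) = σ^[b] 0 := by
          rw [← Function.iterate_add_apply, ← hc]; exact hE'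
        exact hper 0 c (by omega) ((hσ.iterate b) h2)
    · intro n
      have key : ∀ a, σ^[a] (σ (σ n)) = σ^[a + 2] n := by
        intro a
        rw [Function.iterate_add_apply]
        simp [Function.iterate_succ_apply]
      constructor
      · rintro ⟨a, b, hab, hE⟩
        refine ⟨a, b + 2, by omega, ?_⟩
        rw [key a]
        have h1 : σ^[a + 2] n = σ^[2] (σ^[a] n) := by
          rw [← Function.iterate_add_apply]; ring_nf
        have h2 : σ^[b + 2] 0 = σ^[2] (σ^[b] 0) := by
          rw [← Function.iterate_add_apply]; ring_nf
        rw [h1, h2, hE]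
      · rintro ⟨a, b, hab, hE⟩
        rw [key a] at hE
        exact ⟨a + 2, b, by omega, hE⟩
end

section
/- Let σ : ℕ → ℕ be injective and not surjective, and fix n₀ ∉ range σ. Then the set B = {σ^{2k}(n₀) : k ∈ ℕ₀} is a nonempty proper subset of ℕ satisfying n ∈ B ⟺ σ²(n) ∈ B for all n. -/
/-- If `σ : ℕ → ℕ` is injective and not surjective and `n₀ ∉ range σ`, then
`B = {σ^{2k}(n₀) : k ∈ ℕ₀}` is a nonempty proper subset of `ℕ` with
`n ∈ B ↔ σ²(n) ∈ B` for all `n`. -/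
theorem stmt6 (σ : ℕ → ℕ) (hσ : Function.Injective σ) (hns : ¬ Function.Surjective σ)
    (n₀ : ℕ) (hn₀ : n₀ ∉ Set.range σ) :
    (Set.range fun k : ℕ => (σ ∘ σ)^[k] n₀).Nonempty ∧
    (Set.range fun k : ℕ => (σ ∘ σ)^[k] n₀) ≠ Set.univ ∧
    ∀ n : ℕ, (n ∈ Set.range fun k : ℕ => (σ ∘ σ)^[k] n₀) ↔
      (σ (σ n) ∈ Set.range fun k : ℕ => (σ ∘ σ)^[k] n₀) := by
  refine ⟨⟨n₀, 0, rfl⟩, ?_, ?_⟩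
  · intro h
    have : σ n₀ ∈ Set.range fun k : ℕ => (σ ∘ σ)^[k] n₀ := h ▸ Set.mem_univ _
    obtain ⟨k, hk⟩ := this
    dsimp only at hk
    cases k with
    | zero => exact hn₀ ⟨n₀, hk.symm⟩
    | succ k =>
      rw [Function.iterate_succ_apply'] at hk
      simp only [Function.comp_apply] at hk
      exact hn₀ ⟨(σ ∘ σ)^[k] n₀, (hσ hk.symm).symm⟩
  · intro n
    constructor
    · rintro ⟨k, rfl⟩
      refine ⟨k + 1, ?_⟩
      show (σ ∘ σ)^[k + 1] n₀ = _
      rw [Function.iterate_succ_apply']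
      rfl
    · rintro ⟨k, hk⟩
      dsimp only at hk
      cases k with
      | zero => exact absurd ⟨σ n, hk.symm⟩ hn₀
      | succ k =>
        rw [Function.iterate_succ_apply'] at hk
        exact ⟨k, hσ (hσ hk)⟩
end

section
/- Let H be a Hilbert space (or Banach space) with orthonormal (or unconditional) basis (eₙ), let σ : ℕ → ℕ be injective, and let T be a bounded operator with Teₙ = wₙ e_{σ(n)} for scalars wₙ. Then there exists a non-scalar bounded projection P (P² = P, P ≠ 0, P ≠ I) such that T²P = PT². -/
/-!
The orthogonal projection onto the closed span of `{eₙ : n ∈ B}` commutes with `T²` as soon as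
`(σ ∘ σ) ⁻¹' B = B`, and it is neither `0` nor `1` when `B` is neither empty nor everything.
Such a `B` exists for every injective `σ` on an infinite set: if some point `a` is periodic, its
finite orbit will do; otherwise take the points `x` with `σᵏ x = σˡ a` for some even `k + l`,
which contain `a` but not `σ a`.
-/

open Function Set Submodule

namespace Function

variable {α : Type*} {f : α → α}

theorem Injective.isPeriodicPt_sub_of_iterate_eq (hf : Injective f) {m n : ℕ} {x : α}
    (hmn : m ≤ n) (h : f^[m] x = f^[n] x) : IsPeriodicPt f (n - m) x := by
  refine (hf.iterate m) ?_
  rw [← iterate_add_apply, Nat.add_sub_cancel' hmn, h]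

theorem IsPeriodicPt.finite_range_iterate {n : ℕ} {x : α} (hx : IsPeriodicPt f n x)
    (hn : 0 < n) : (range fun k => f^[k] x).Finite := by
  refine (finite_range fun k : Fin n => f^[k] x).subset ?_
  rintro _ ⟨k, rfl⟩
  exact ⟨⟨k % n, Nat.mod_lt k hn⟩, hx.iterate_mod_apply k⟩

theorem Injective.preimage_range_iterate_of_isPeriodicPt (hf : Injective f) {n : ℕ} {x : α}
    (hx : IsPeriodicPt f n x) (hn : 0 < n) :
    f ⁻¹' range (fun k => f^[k] x) = range fun k => f^[k] x := by
  ext y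
  constructor
  · rintro ⟨k, hk⟩
    refine ⟨k + n - 1, hf ?_⟩
    rw [← iterate_succ_apply' f, ← hk, Nat.succ_eq_add_one, Nat.sub_add_cancel (by omega),
      iterate_add_apply, hx.eq]
  · rintro ⟨k, rfl⟩
    exact ⟨k + 1, iterate_succ_apply' f k x⟩

def evenOrbitClass (f : α → α) (a : α) : Set α :=
  {x | ∃ k l, f^[k] x = f^[l] a ∧ Even (k + l)}

theorem preimage_comp_self_evenOrbitClass (f : α → α) (a : α) :
    (f ∘ f) ⁻¹' evenOrbitClass f a = evenOrbitClass f a := by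
  ext x
  constructor
  · rintro ⟨k, l, h, hkl⟩
    exact ⟨k + 2, l, h, by simpa [add_right_comm] using hkl.add even_two⟩
  · rintro ⟨k, l, h, hkl⟩
    refine ⟨k, l + 2, ?_, by simpa [add_assoc] using hkl.add even_two⟩
    change f^[k] (f^[2] x) = f^[l + 2] a
    rw [← iterate_add_apply, add_comm, iterate_add_apply, h, ← iterate_add_apply, add_comm]

theorem Injective.apply_notMem_evenOrbitClass (hf : Injective f) {a : α}
    (ha : a ∉ periodicPts f) : f a ∉ evenOrbitClass f a := by
  rintro ⟨k, l, h, hkl⟩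
  rw [← iterate_succ_apply] at h
  rcases le_total (k + 1) l with hle | hle
  · exact ha ⟨_, by grind, hf.isPeriodicPt_sub_of_iterate_eq hle h⟩
  · exact ha ⟨_, by grind, hf.isPeriodicPt_sub_of_iterate_eq hle h.symm⟩

theorem Injective.exists_preimage_comp_self_eq [Infinite α] (hf : Injective f) :
    ∃ B : Set α, B.Nonempty ∧ B ≠ univ ∧ (f ∘ f) ⁻¹' B = B := by
  obtain ⟨a⟩ := Infinite.nonempty α
  by_cases ha : a ∈ periodicPts f
  · obtain ⟨n, hn, hper⟩ := ha
    refine ⟨range fun k => f^[k] a, ⟨a, 0, rfl⟩,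
      fun h => infinite_univ (h ▸ hper.finite_range_iterate hn), ?_⟩
    rw [preimage_comp, hf.preimage_range_iterate_of_isPeriodicPt hper hn,
      hf.preimage_range_iterate_of_isPeriodicPt hper hn]
  · exact ⟨evenOrbitClass f a, ⟨a, 0, 0, rfl, ⟨0, rfl⟩⟩,
      fun h => hf.apply_notMem_evenOrbitClass ha (h ▸ mem_univ _),
      preimage_comp_self_evenOrbitClass f a⟩

end Function

namespace HilbertBasis

variable {ι 𝕜 E : Type*} [RCLike 𝕜] [NormedAddCommGroup E] [InnerProductSpace 𝕜 E]
  (e : HilbertBasis ι 𝕜 E) (B : Set ι)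

noncomputable def closedSpan : Submodule 𝕜 E := (span 𝕜 (e '' B)).topologicalClosure

variable {B}

theorem mem_closedSpan {i : ι} (hi : i ∈ B) : e i ∈ e.closedSpan B :=
  le_topologicalClosure _ (subset_span (mem_image_of_mem e hi))

theorem mem_orthogonal_closedSpan {i : ι} (hi : i ∉ B) : e i ∈ (e.closedSpan B)ᗮ := by
  have : span 𝕜 {e i} ⟂ span 𝕜 (e '' B) := isOrtho_span.2 <| by
    rintro _ rfl _ ⟨j, hj, rfl⟩
    exact e.orthonormal.2 (ne_of_mem_of_not_mem hj hi).symm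
  rw [closedSpan, orthogonal_closure]
  exact this (mem_span_singleton_self _)

variable [CompleteSpace E]

instance : CompleteSpace (e.closedSpan B) := (isClosed_topologicalClosure _).completeSpace_coe

theorem starProjection_closedSpan_of_mem {i : ι} (hi : i ∈ B) :
    (e.closedSpan B).starProjection (e i) = e i :=
  starProjection_eq_self_iff.2 (e.mem_closedSpan hi)

theorem starProjection_closedSpan_of_notMem {i : ι} (hi : i ∉ B) :
    (e.closedSpan B).starProjection (e i) = 0 := by
  rw [starProjection_apply,
    orthogonalProjectionOnto_eq_zero_iff.2 (e.mem_orthogonal_closedSpan hi), ZeroMemClass.coe_zero]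

theorem starProjection_closedSpan_ne_zero (hB : B.Nonempty) :
    (e.closedSpan B).starProjection ≠ 0 := fun h => by
  obtain ⟨i, hi⟩ := hB
  exact e.orthonormal.ne_zero i (by simpa [h] using (e.starProjection_closedSpan_of_mem hi).symm)

theorem starProjection_closedSpan_ne_one (hB : B ≠ univ) :
    (e.closedSpan B).starProjection ≠ 1 := fun h => by
  obtain ⟨i, hi⟩ := (ne_univ_iff_exists_notMem B).1 hB
  exact e.orthonormal.ne_zero i (by simpa [h] using e.starProjection_closedSpan_of_notMem hi)

theorem comp_starProjection_closedSpan {A : E →L[𝕜] E} {g : ι → ι} {c : ι → 𝕜}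
    (hA : ∀ i, A (e i) = c i • e (g i)) (hB : g ⁻¹' B = B) :
    A ∘L (e.closedSpan B).starProjection = (e.closedSpan B).starProjection ∘L A := by
  refine ContinuousLinearMap.ext_on (dense_iff_topologicalClosure_eq_top.2 e.dense_span) ?_
  rintro _ ⟨i, rfl⟩
  have hgi : g i ∈ B ↔ i ∈ B := Set.ext_iff.1 hB i
  by_cases hi : i ∈ B
  · simp [hA, e.starProjection_closedSpan_of_mem hi, e.starProjection_closedSpan_of_mem (hgi.2 hi)]
  · simp [hA, e.starProjection_closedSpan_of_notMem hi,
      e.starProjection_closedSpan_of_notMem (mt hgi.1 hi)]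

end HilbertBasis

/-- If `T` is a weighted shift-type operator `T eₙ = wₙ e_{σ(n)}` with `σ` injective, on a
Hilbert space with orthonormal basis `(eₙ)`, then `T²` commutes with a non-scalar bounded
projection. -/
theorem stmt7 {H : Type*} [NormedAddCommGroup H] [InnerProductSpace ℂ H]
    [CompleteSpace H] (e : HilbertBasis ℕ ℂ H)
    (σ : ℕ → ℕ) (hσ : Function.Injective σ) (w : ℕ → ℂ)
    (T : H →L[ℂ] H) (hT : ∀ n : ℕ, T (e n) = w n • e (σ n)) :
    ∃ P : H →L[ℂ] H, P ∘L P = P ∧ P ≠ 0 ∧ P ≠ 1 ∧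
      (T ∘L T) ∘L P = P ∘L (T ∘L T) := by
  obtain ⟨B, hBne, hBuniv, hB⟩ := hσ.exists_preimage_comp_self_eq
  have hT2 : ∀ n, (T ∘L T) (e n) = (w n * w (σ n)) • e ((σ ∘ σ) n) := fun n => by
    simp [hT, smul_smul]
  exact ⟨_, (isIdempotentElem_starProjection _).eq, e.starProjection_closedSpan_ne_zero hBne,
    e.starProjection_closedSpan_ne_one hBuniv, e.comp_starProjection_closedSpan hT2 hB⟩
end

section
/- Let T₁ ∈ L(X) and T₂ ∈ L(Y) be quasi-similar: there exist A ∈ L(Y,X) and B ∈ L(X,Y), both injective with dense range, such that T₁A = AT₂ and BT₁ = T₂B. If T₁ commutes with a nonzero compact operator K₁ ∈ L(X), then T₂ commutes with a nonzero compact operator K₂ ∈ L(Y); in fact K₂ = B K₁ A works. -/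
/-- Quasi-similarity preserves commuting with a nonzero compact operator:
if `T₁ A = A T₂`, `B T₁ = T₂ B` with `A`, `B` injective with dense range, and `T₁`
commutes with a nonzero compact `K₁`, then `K₂ = B K₁ A` is a nonzero compact operator
commuting with `T₂`. -/
theorem stmt10 {𝕜 X Y : Type*} [RCLike 𝕜]
    [NormedAddCommGroup X] [NormedSpace 𝕜 X] [CompleteSpace X]
    [NormedAddCommGroup Y] [NormedSpace 𝕜 Y] [CompleteSpace Y]
    (T₁ : X →L[𝕜] X) (T₂ : Y →L[𝕜] Y) (A : Y →L[𝕜] X) (B : X →L[𝕜] Y)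
    (hAinj : Function.Injective A) (hAdr : Dense (Set.range A))
    (hBinj : Function.Injective B) (hBdr : Dense (Set.range B))
    (hA : T₁ ∘L A = A ∘L T₂) (hB : B ∘L T₁ = T₂ ∘L B)
    (K₁ : X →L[𝕜] X) (hK₁ : IsCompactOperator K₁) (hK₁0 : K₁ ≠ 0)
    (hcomm : T₁ ∘L K₁ = K₁ ∘L T₁) :
    IsCompactOperator ((B ∘L K₁) ∘L A) ∧ (B ∘L K₁) ∘L A ≠ 0 ∧
      T₂ ∘L ((B ∘L K₁) ∘L A) = ((B ∘L K₁) ∘L A) ∘L T₂ := by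
  refine ⟨(hK₁.comp_clm A).clm_comp B, ?_, ?_⟩
  · intro h
    -- From B K₁ A = 0 and B injective, K₁ A = 0.
    have hKA : K₁ ∘L A = 0 := by
      ext y
      have := congrFun (congrArg DFunLike.coe h) y
      simp only [ContinuousLinearMap.comp_apply, ContinuousLinearMap.zero_apply] at this ⊢
      exact hBinj (by simpa using this)
    -- K₁ vanishes on the dense range of A, hence K₁ = 0.
    apply hK₁0
    ext x
    have hcl : Continuous K₁ := K₁.continuous
    have : ∀ z ∈ Set.range A, K₁ z = 0 := by
      rintro _ ⟨y, rfl⟩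
      have := congrFun (congrArg DFunLike.coe hKA) y
      simpa using this
    have heq : Set.EqOn K₁ (0 : X →L[𝕜] X) (Set.range A) := by
      intro z hz; simpa using this z hz
    have := Continuous.ext_on hAdr K₁.continuous (ContinuousLinearMap.continuous 0) heq
    simpa using congrFun this x
  · have hA' : ∀ y, T₁ (A y) = A (T₂ y) := fun y => congrFun (congrArg DFunLike.coe hA) y
    have hB' : ∀ x, B (T₁ x) = T₂ (B x) := fun x => congrFun (congrArg DFunLike.coe hB) x
    have hc' : ∀ x, T₁ (K₁ x) = K₁ (T₁ x) := fun x => congrFun (congrArg DFunLike.coe hcomm) x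
    ext y
    simp only [ContinuousLinearMap.comp_apply]
    rw [← hB', hc', hA']
end
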